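/- Let ε ∈ (0,1/2) and let κ = N(m(κ),1) and η = N(m(η),1) be unit-variance Gaussians with |m(κ) - m(η)| > 2·Φ⁻¹(1/(2(1-ε))). Then for all probability distributions H₁, H₂ on ℝ, (1-ε)κ + ε·H₁ ≠ (1-ε)η + ε·H₂, i.e., the ε-corruption neighbourhoods of κ and η are disjoint. -/

import Mathlib

open MeasureTheory ProbabilityTheory Real Set
open scoped ENNReal

noncomputable section

/-- Standard normal probability density function. -/
def stdphi (x : ℝ) : ℝ := (Real.sqrt (2 * Real.pi))⁻¹ * Real.exp (-x ^ 2 / 2)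

/-- Standard normal cumulative distribution function. -/
def stdPhi (x : ℝ) : ℝ := ((gaussianReal 0 1) (Set.Iic x)).toReal

/-- Standard normal quantile function. -/
def stdPhiInv (p : ℝ) : ℝ := sInf {x : ℝ | p ≤ stdPhi x}

/-- Minimum distinction gap under corruption, `Δ_min = 2 Φ⁻¹(1/(2(1-ε)))`. -/
def Dmin (ε : ℝ) : ℝ := 2 * stdPhiInv (1 / (2 * (1 - ε)))

/-- `ε`-corrupted mixture `(1-ε) μ + ε H` of two measures on `ℝ`. -/
def mix (ε : ℝ) (μ H : Measure ℝ) : Measure ℝ :=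
  ENNReal.ofReal (1 - ε) • μ + ENNReal.ofReal ε • H

open Classical in
/-- Kullback–Leibler divergence. -/
def KLdiv (P Q : Measure ℝ) : ℝ≥0∞ :=
  if P ≪ Q ∧ Integrable (fun x => Real.log (P.rnDeriv Q x).toReal) P then
    ENNReal.ofReal (∫ x, Real.log (P.rnDeriv Q x).toReal ∂P) else ⊤

/-- Corrupted Gaussian divergence `kl^ε_G(x, y)`: the infimum over pairs of corruption
distributions of the KL divergence between the corrupted unit-variance Gaussians. -/
def klG (ε x y : ℝ) : ℝ≥0∞ :=
  ⨅ (H : Measure ℝ) (_ : IsProbabilityMeasure H) (H' : Measure ℝ)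
    (_ : IsProbabilityMeasure H'),
    KLdiv (mix ε (gaussianReal x 1) H) (mix ε (gaussianReal y 1) H')

/-- (Lower) median of a probability measure on `ℝ`. -/
def measMed (μ : Measure ℝ) : ℝ := sInf {x : ℝ | 1 / 2 ≤ (μ (Set.Iic x)).toReal}

/-- Quantile function of a probability measure on `ℝ`. -/
def quantile (μ : Measure ℝ) (p : ℝ) : ℝ := sInf {x : ℝ | p ≤ (μ (Set.Iic x)).toReal}

/-- Empirical median of a finite sample. -/
def empMed {n : ℕ} (X : Fin n → ℝ) : ℝ :=
  sInf {x : ℝ | (n : ℝ) ≤ 2 * Nat.card {i : Fin n // X i ≤ x}}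

/-- The variance proxy `s_ε` for the concentration of the median under corruption. -/
def sEps (ε : ℝ) : ℝ :=
  (Real.sqrt (ε / 2 / Real.log (1 / (1 - 2 * ε))) +
      Real.sqrt ((1 - 2 * ε) / (4 * Real.log ((1 - ε) / ε)))) /
    ((1 - ε) * stdphi (Dmin ε / 2 + 1))

/-- Mean of a measure on `ℝ`. -/
def meanOf (μ : Measure ℝ) : ℝ := ∫ x, x ∂μ

/-- Corrupted KL-inf `KL^ε_inf(η, x; L)`. -/
def KLinf (ε : ℝ) (η : Measure ℝ) (x : ℝ) (L : Set (Measure ℝ)) : ℝ≥0∞ :=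
  ⨅ (κ : Measure ℝ) (_ : κ ∈ L) (_ : x ≤ meanOf κ) (H : Measure ℝ)
    (_ : IsProbabilityMeasure H) (H' : Measure ℝ) (_ : IsProbabilityMeasure H'),
    KLdiv (mix ε η H) (mix ε κ H')

/-! Cut `ℝ` at the midpoint `c` of the two means, at distance `Δ / 2` from each. Whatever the
corruptions, the first mixture gives `Iic c` mass at least `(1 - ε) Φ(Δ / 2)` and the second gives
`Ioi c` mass at least as much. Since `Δ / 2 > Φ⁻¹(1 / (2(1 - ε)))`, both masses exceed `1 / 2`,
which no single probability measure allows. -/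

section Mixture

variable {ε : ℝ} {μ ν H H₁ H₂ : Measure ℝ}

lemma mix_real_apply (hε0 : 0 ≤ ε) (hε1 : ε ≤ 1) [IsFiniteMeasure μ] [IsFiniteMeasure H]
    (s : Set ℝ) : (mix ε μ H).real s = (1 - ε) * μ.real s + ε * H.real s := by
  simp only [mix, measureReal_def, Measure.add_apply, Measure.smul_apply, smul_eq_mul]
  rw [ENNReal.toReal_add (by finiteness) (by finiteness), ENNReal.toReal_mul,
    ENNReal.toReal_mul, ENNReal.toReal_ofReal (by linarith), ENNReal.toReal_ofReal hε0]

lemma isProbabilityMeasure_mix (hε0 : 0 ≤ ε) (hε1 : ε ≤ 1) [IsProbabilityMeasure μ]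
    [IsProbabilityMeasure H] : IsProbabilityMeasure (mix ε μ H) :=
  ⟨by simp only [mix, Measure.add_apply, Measure.smul_apply, measure_univ, smul_eq_mul, mul_one]
      rw [← ENNReal.ofReal_add (by linarith) hε0, sub_add_cancel, ENNReal.ofReal_one]⟩

lemma mix_ne_mix_of_half_lt (hε0 : 0 ≤ ε) (hε1 : ε ≤ 1) [IsProbabilityMeasure μ]
    [IsProbabilityMeasure ν] [IsProbabilityMeasure H₁] [IsProbabilityMeasure H₂]
    {s : Set ℝ} (hs : MeasurableSet s) (hμ : 1 / 2 < (1 - ε) * μ.real s)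
    (hν : 1 / 2 < (1 - ε) * ν.real sᶜ) : mix ε μ H₁ ≠ mix ε ν H₂ := by
  intro heq
  have hs_mass : 1 / 2 < (mix ε ν H₂).real s := by
    rw [← heq, mix_real_apply hε0 hε1]
    nlinarith [measureReal_nonneg (μ := H₁) (s := s)]
  have hsc_mass : 1 / 2 < (mix ε ν H₂).real sᶜ := by
    rw [mix_real_apply hε0 hε1]
    nlinarith [measureReal_nonneg (μ := H₂) (s := sᶜ)]
  have := isProbabilityMeasure_mix (μ := ν) (H := H₂) hε0 hε1
  have htotal : (mix ε ν H₂).real s + (mix ε ν H₂).real sᶜ = 1 := by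
    rw [measureReal_add_measureReal_compl hs, probReal_univ]
  linarith

end Mixture

section StandardNormal

local notation "G" => gaussianReal 0 1

lemma stdPhi_eq_cdf : stdPhi = cdf G := funext fun x => (cdf_eq_real G x).symm

lemma stdPhi_strictMono : StrictMono stdPhi := by
  intro x y hxy
  have hvol : volume (Ioc x y) ≠ 0 := by simpa [Real.volume_Ioc] using hxy
  have hpos : (G) (Ioc x y) ≠ 0 := fun h =>
    hvol (gaussianReal_absolutelyContinuous' 0 one_ne_zero h)
  rw [← measure_cdf G, StieltjesFunction.measure_Ioc, ne_eq, ENNReal.ofReal_eq_zero, not_le,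
    ← stdPhi_eq_cdf] at hpos
  linarith

lemma stdPhi_neg (x : ℝ) : stdPhi (-x) = 1 - stdPhi x := by
  have hx : (G) {x} = 0 :=
    gaussianReal_absolutelyContinuous 0 one_ne_zero (Real.volume_singleton)
  calc stdPhi (-x) = ((G).map (fun y => -y)).real (Iic (-x)) := by
        rw [gaussianReal_map_neg, neg_zero]; rfl
    _ = (G).real (Ici x) := by
        rw [map_measureReal_apply measurable_neg measurableSet_Iic, Set.neg_preimage,
          Set.neg_Iic, neg_neg]
    _ = (G).real (Iic x)ᶜ := by
        rw [compl_Iic, measureReal_def, measureReal_def, measure_congr (Ioi_ae_eq_Ici' hx)]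
    _ = 1 - stdPhi x := probReal_compl_eq_one_sub measurableSet_Iic

lemma gaussianReal_real_Iic (m c : ℝ) : (gaussianReal m 1).real (Iic c) = stdPhi (c - m) := by
  have h := gaussianReal_map_add_const (μ := 0) (v := 1) m
  rw [zero_add] at h
  rw [← h, map_measureReal_apply (measurable_add_const m) measurableSet_Iic,
    Set.preimage_add_const_Iic]
  rfl

lemma gaussianReal_real_Ioi (m c : ℝ) : (gaussianReal m 1).real (Ioi c) = stdPhi (m - c) := by
  rw [← compl_Iic, probReal_compl_eq_one_sub measurableSet_Iic, gaussianReal_real_Iic,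
    ← stdPhi_neg, neg_sub]

lemma lt_stdPhi_of_stdPhiInv_lt {p x : ℝ} (hp : p < 1) (h : stdPhiInv p < x) :
    p < stdPhi x := by
  have hne : {y | p ≤ stdPhi y}.Nonempty :=
    ((stdPhi_eq_cdf ▸ tendsto_cdf_atTop G).eventually (eventually_ge_nhds hp)).exists
  obtain ⟨y, hy, hyx⟩ := exists_lt_of_csInf_lt hne h
  exact hy.trans_lt (stdPhi_strictMono hyx)

end StandardNormal

lemma mix_gaussianReal_ne_mix {ε a b : ℝ} (hε0 : 0 ≤ ε) (hε1 : ε ≤ 1)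
    (h : 1 / 2 < (1 - ε) * stdPhi ((b - a) / 2)) (H₁ H₂ : Measure ℝ) [IsProbabilityMeasure H₁]
    [IsProbabilityMeasure H₂] : mix ε (gaussianReal a 1) H₁ ≠ mix ε (gaussianReal b 1) H₂ := by
  have hmid₁ : (a + b) / 2 - a = (b - a) / 2 := by ring
  have hmid₂ : b - (a + b) / 2 = (b - a) / 2 := by ring
  refine mix_ne_mix_of_half_lt hε0 hε1 (s := Iic ((a + b) / 2)) measurableSet_Iic ?_ ?_
  · rwa [gaussianReal_real_Iic, hmid₁]
  · rwa [compl_Iic, gaussianReal_real_Ioi, hmid₂]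

/-- if the Gaussian means are more than `2 Φ⁻¹(1/(2(1-ε)))` apart, the
corruption neighbourhoods are disjoint. -/
theorem corruption_neighbourhoods_disjoint (ε mκ mη : ℝ)
    (hε : ε ∈ Set.Ioo (0 : ℝ) (1 / 2))
    (h : 2 * stdPhiInv (1 / (2 * (1 - ε))) < |mκ - mη|) :
    ∀ H₁ H₂ : Measure ℝ, IsProbabilityMeasure H₁ → IsProbabilityMeasure H₂ →
      mix ε (gaussianReal mκ 1) H₁ ≠ mix ε (gaussianReal mη 1) H₂ := by
  intro H₁ H₂ _ _
  obtain ⟨hε0, hε_half⟩ := hε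
  have hp : 1 / (2 * (1 - ε)) < 1 := by
    rw [div_lt_one (by linarith)]
    linarith
  have hsep : 1 / 2 < (1 - ε) * stdPhi (|mκ - mη| / 2) :=
    calc 1 / 2 = (1 - ε) * (1 / (2 * (1 - ε))) := by
          field_simp
          exact (div_self (by linarith)).symm
      _ < (1 - ε) * stdPhi (|mκ - mη| / 2) := by
        gcongr
        · linarith
        · exact lt_stdPhi_of_stdPhiInv_lt hp (by linarith)
  rcases le_total mκ mη with hle | hle
  · rw [abs_sub_comm, abs_of_nonneg (sub_nonneg.2 hle)] at hsep
    exact mix_gaussianReal_ne_mix hε0.le (by linarith) hsep H₁ H₂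
  · rw [abs_of_nonneg (sub_nonneg.2 hle)] at hsep
    exact (mix_gaussianReal_ne_mix hε0.le (by linarith) hsep H₂ H₁).symm
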